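/- arXiv:2102.11476 — 4 statements merged into one kernel-verified Lean document; each statement's English description precedes it below -/
import Mathlib

section
/- Let π and ρ be probability measures on a measurable space with π absolutely continuous with respect to ρ, and let f be a nonnegative measurable function with E_π[f log f] < ∞ and 0 < E_π f < ∞. Then E_π[f] · log(E_π[f] / E_ρ[f]) ≤ Ent_π(f) + E_π[f] · log(1 + χ²(π∥ρ)). -/
open MeasureTheory ENNReal

noncomputable def chi2ENN {Y : Type*} [MeasurableSpace Y] (ρ σ : Measure Y) : ℝ≥0∞ :=
  (∫⁻ y, (ρ.rnDeriv σ y) ^ 2 ∂σ) - 1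

noncomputable def ent {Y : Type*} [MeasurableSpace Y] (ρ : Measure Y) (g : Y → ℝ) : ℝ :=
  ∫ y, g y * Real.log (g y) ∂ρ - (∫ y, g y ∂ρ) * Real.log (∫ y, g y ∂ρ)

/-!
Write `G = dμ/dρ`, `a = E_μ f`, `b = E_ρ f` and `N = ∫ G² dρ = E_μ G`. Split
`-log f = log (1/G) + log (G/f)` and bound each logarithm by its tangent line,
`log y ≤ y / c + log c - 1`. After multiplying by `f` and integrating against `μ`, the two
tangent terms become `E_μ[f/G] / c₁ ≤ b / c₁` and `E_μ G / c₂ = N / c₂`; the choice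
`c₁ = b / a`, `c₂ = N / a` gives `-E_μ[f log f] ≤ a log (b/a) + a log (N/a)`, which is the claim.
Summing the two logarithms before integrating is what avoids any integrability assumption
on `f log G`.
-/

namespace Real

theorem log_le_div_add_log_sub_one {x c : ℝ} (hx : 0 < x) (hc : 0 < c) :
    log x ≤ x / c + log c - 1 := by
  have := log_le_sub_one_of_pos (div_pos hx hc)
  rw [log_div hx.ne' hc.ne'] at this
  linarith

theorem neg_mul_log_le {x g c₁ c₂ : ℝ} (hx : 0 ≤ x) (hg : 0 < g) (hc₁ : 0 < c₁) (hc₂ : 0 < c₂) :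
    -(x * log x) ≤ x / g / c₁ + g / c₂ + x * (log c₁ + log c₂ - 2) := by
  rcases hx.eq_or_lt with rfl | hx
  · simp only [zero_mul, neg_zero, zero_div, zero_add]
    positivity
  have h₁ := log_le_div_add_log_sub_one (inv_pos.2 hg) hc₁
  have h₂ := log_le_div_add_log_sub_one (div_pos hg hx) hc₂
  have hsplit : -log x = log g⁻¹ + log (g / x) := by
    rw [log_inv, log_div hg.ne' hx.ne']
    ring
  calc -(x * log x) = x * (log g⁻¹ + log (g / x)) := by rw [← hsplit]; ring
    _ ≤ x * (g⁻¹ / c₁ + log c₁ - 1 + (g / x / c₂ + log c₂ - 1)) := by gcongr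
    _ = x / g / c₁ + g / c₂ + x * (log c₁ + log c₂ - 2) := by field_simp; ring

end Real

theorem abs_mul_div_le {K : Type*} [Field K] [LinearOrder K] [IsStrictOrderedRing K] (x y : K) :
    |x * (y / x)| ≤ |y| := by
  rcases eq_or_ne x 0 with rfl | hx
  · simp
  · rw [mul_div_cancel₀ _ hx]

theorem ENNReal.two_mul_le_sq_add_one (x : ℝ≥0∞) : 2 * x ≤ x ^ 2 + 1 := by
  induction x with
  | top => simp
  | coe x => exact_mod_cast by simpa using two_mul_le_add_sq x 1

section

variable {Ω : Type*} [MeasurableSpace Ω]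

theorem neg_integral_mul_log_le {μ : Measure Ω} {f g : Ω → ℝ} {B₁ B₂ : ℝ} (hf0 : 0 ≤ f)
    (hg : ∀ᵐ ω ∂μ, 0 < g ω) (hfi : Integrable f μ)
    (hflog : Integrable (fun ω => f ω * Real.log (f ω)) μ)
    (hfgi : Integrable (fun ω => f ω / g ω) μ) (hgi : Integrable g μ)
    (hB₁ : ∫ ω, f ω / g ω ∂μ ≤ B₁) (hB₂ : ∫ ω, g ω ∂μ ≤ B₂) (hB₁0 : 0 < B₁) (hB₂0 : 0 < B₂)
    (ha : 0 < ∫ ω, f ω ∂μ) :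
    -∫ ω, f ω * Real.log (f ω) ∂μ
      ≤ (∫ ω, f ω ∂μ) * Real.log (B₁ / ∫ ω, f ω ∂μ)
        + (∫ ω, f ω ∂μ) * Real.log (B₂ / ∫ ω, f ω ∂μ) := by
  set a := ∫ ω, f ω ∂μ
  have hc₁ : 0 < B₁ / a := div_pos hB₁0 ha
  have hc₂ : 0 < B₂ / a := div_pos hB₂0 ha
  have i₁ : Integrable (fun ω => f ω / g ω / (B₁ / a)) μ := hfgi.div_const _
  have i₂ : Integrable (fun ω => g ω / (B₂ / a)) μ := hgi.div_const _
  have i₃ : Integrable (fun ω => f ω * (Real.log (B₁ / a) + Real.log (B₂ / a) - 2)) μ :=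
    hfi.mul_const _
  have hmaj : ∫ ω, -(f ω * Real.log (f ω)) ∂μ ≤ ∫ ω, (f ω / g ω / (B₁ / a) + g ω / (B₂ / a)
      + f ω * (Real.log (B₁ / a) + Real.log (B₂ / a) - 2)) ∂μ :=
    integral_mono_ae hflog.neg ((i₁.add i₂).add i₃)
      (hg.mono fun ω hω => Real.neg_mul_log_le (hf0 ω) hω hc₁ hc₂)
  rw [integral_neg, integral_add (f := fun ω => f ω / g ω / (B₁ / a) + g ω / (B₂ / a))
    (i₁.add i₂) i₃, integral_add i₁ i₂, integral_div, integral_div, integral_mul_const] at hmaj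
  have h₁ : (∫ ω, f ω / g ω ∂μ) / (B₁ / a) ≤ a := by
    calc _ ≤ B₁ / (B₁ / a) := by gcongr
      _ = a := by field_simp
  have h₂ : (∫ ω, g ω ∂μ) / (B₂ / a) ≤ a := by
    calc _ ≤ B₂ / (B₂ / a) := by gcongr
      _ = a := by field_simp
  linarith

theorem ent_nonneg {μ : Measure Ω} [IsProbabilityMeasure μ] {f : Ω → ℝ} (hf0 : 0 ≤ f)
    (hfi : Integrable f μ) (hflog : Integrable (fun ω => f ω * Real.log (f ω)) μ) :
    0 ≤ ent μ f :=
  sub_nonneg.2 <| Real.convexOn_mul_log.map_integral_le Real.continuous_mul_log.continuousOn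
    isClosed_Ici (ae_of_all _ hf0) hfi hflog

section RnDeriv

variable {μ ρ : Measure Ω}

theorem one_le_lintegral_rnDeriv_sq [IsProbabilityMeasure μ] [IsProbabilityMeasure ρ]
    (hac : μ ≪ ρ) : 1 ≤ ∫⁻ ω, μ.rnDeriv ρ ω ^ 2 ∂ρ := by
  have h : 2 ≤ ∫⁻ ω, μ.rnDeriv ρ ω ^ 2 ∂ρ + 1 :=
    calc (2 : ℝ≥0∞) = ∫⁻ ω, 2 * μ.rnDeriv ρ ω ∂ρ := by
          rw [lintegral_const_mul _ (μ.measurable_rnDeriv ρ), Measure.lintegral_rnDeriv hac,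
            measure_univ, mul_one]
      _ ≤ ∫⁻ ω, (μ.rnDeriv ρ ω ^ 2 + 1) ∂ρ :=
          lintegral_mono fun ω => ENNReal.two_mul_le_sq_add_one _
      _ = ∫⁻ ω, μ.rnDeriv ρ ω ^ 2 ∂ρ + 1 := by
          rw [lintegral_add_right _ measurable_const, lintegral_const, measure_univ, mul_one]
  rwa [← one_add_one_eq_two, ENNReal.add_le_add_iff_right one_ne_top] at h

variable [μ.HaveLebesgueDecomposition ρ]

theorem lintegral_rnDeriv_eq_lintegral_rnDeriv_sq (hac : μ ≪ ρ) :
    ∫⁻ ω, μ.rnDeriv ρ ω ∂μ = ∫⁻ ω, μ.rnDeriv ρ ω ^ 2 ∂ρ := by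
  rw [← lintegral_rnDeriv_mul hac (μ.measurable_rnDeriv ρ).aemeasurable]
  simp only [sq]

theorem integrable_toReal_rnDeriv (hac : μ ≪ ρ) (hN : ∫⁻ ω, μ.rnDeriv ρ ω ^ 2 ∂ρ ≠ ∞) :
    Integrable (fun ω => (μ.rnDeriv ρ ω).toReal) μ :=
  integrable_toReal_of_lintegral_ne_top (μ.measurable_rnDeriv ρ).aemeasurable
    (by rwa [lintegral_rnDeriv_eq_lintegral_rnDeriv_sq hac])

theorem integral_toReal_rnDeriv (hac : μ ≪ ρ) (hN : ∫⁻ ω, μ.rnDeriv ρ ω ^ 2 ∂ρ ≠ ∞) :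
    ∫ ω, (μ.rnDeriv ρ ω).toReal ∂μ = (∫⁻ ω, μ.rnDeriv ρ ω ^ 2 ∂ρ).toReal := by
  rw [← lintegral_rnDeriv_eq_lintegral_rnDeriv_sq hac]
  refine integral_toReal (μ.measurable_rnDeriv ρ).aemeasurable (ae_lt_top
    (μ.measurable_rnDeriv ρ) ?_)
  rwa [lintegral_rnDeriv_eq_lintegral_rnDeriv_sq hac]

variable [SigmaFinite μ]

theorem integrable_div_toReal_rnDeriv (hac : μ ≪ ρ) {f : Ω → ℝ} (hfρ : Integrable f ρ) :
    Integrable (fun ω => f ω / (μ.rnDeriv ρ ω).toReal) μ := by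
  refine (integrable_toReal_rnDeriv_mul_iff hac).1 (hfρ.mono ?_ (ae_of_all _ fun ω => ?_))
  · have hG := (μ.measurable_rnDeriv ρ).ennreal_toReal.aestronglyMeasurable (μ := ρ)
    exact hG.mul (hfρ.aestronglyMeasurable.div₀ hG)
  · simpa only [Real.norm_eq_abs] using abs_mul_div_le _ (f ω)

theorem integral_div_toReal_rnDeriv_le (hac : μ ≪ ρ) {f : Ω → ℝ} (hf0 : 0 ≤ f)
    (hfρ : Integrable f ρ) :
    ∫ ω, f ω / (μ.rnDeriv ρ ω).toReal ∂μ ≤ ∫ ω, f ω ∂ρ := by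
  rw [← integral_toReal_rnDeriv_mul hac]
  refine integral_mono ((integrable_toReal_rnDeriv_mul_iff hac).2
    (integrable_div_toReal_rnDeriv hac hfρ)) hfρ fun ω => ?_
  exact (le_abs_self _).trans ((abs_mul_div_le _ (f ω)).trans_eq (abs_of_nonneg (hf0 ω)))

theorem mul_log_div_le_ent_add_mul_log [IsProbabilityMeasure μ] [IsProbabilityMeasure ρ]
    (hac : μ ≪ ρ) {f : Ω → ℝ} (hf0 : 0 ≤ f) (hfi : Integrable f μ)
    (hflog : Integrable (fun ω => f ω * Real.log (f ω)) μ) (ha : 0 < ∫ ω, f ω ∂μ)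
    (hN : ∫⁻ ω, μ.rnDeriv ρ ω ^ 2 ∂ρ ≠ ∞) :
    (∫ ω, f ω ∂μ) * Real.log ((∫ ω, f ω ∂μ) / ∫ ω, f ω ∂ρ)
      ≤ ent μ f + (∫ ω, f ω ∂μ) * Real.log (∫⁻ ω, μ.rnDeriv ρ ω ^ 2 ∂ρ).toReal := by
  have hM : 1 ≤ (∫⁻ ω, μ.rnDeriv ρ ω ^ 2 ∂ρ).toReal := by
    simpa using (ENNReal.toReal_le_toReal one_ne_top hN).2 (one_le_lintegral_rnDeriv_sq hac)
  by_cases hfρ : Integrable f ρ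
  swap
  · -- `∫ f ∂ρ = 0` by convention, so the left-hand side is `a * log 0 = 0`.
    rw [integral_undef hfρ, _root_.div_zero, Real.log_zero, mul_zero]
    exact add_nonneg (ent_nonneg hf0 hfi hflog) (mul_nonneg ha.le (Real.log_nonneg hM))
  have hb : 0 < ∫ ω, f ω ∂ρ := (integral_pos_iff_support_of_nonneg hf0 hfρ).2 <|
    pos_iff_ne_zero.2 fun h => ((integral_pos_iff_support_of_nonneg hf0 hfi).1 ha).ne' (hac h)
  have hG : ∀ᵐ ω ∂μ, 0 < (μ.rnDeriv ρ ω).toReal := by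
    filter_upwards [Measure.rnDeriv_pos hac, hac.ae_le (Measure.rnDeriv_lt_top μ ρ)]
      with ω hpos hfin
    exact ENNReal.toReal_pos hpos.ne' hfin.ne
  have key := neg_integral_mul_log_le hf0 hG hfi hflog (integrable_div_toReal_rnDeriv hac hfρ)
    (integrable_toReal_rnDeriv hac hN) (integral_div_toReal_rnDeriv_le hac hf0 hfρ)
    (integral_toReal_rnDeriv hac hN).le hb (zero_lt_one.trans_le hM) ha
  rw [Real.log_div hb.ne' ha.ne', Real.log_div (zero_lt_one.trans_le hM).ne' ha.ne'] at key
  rw [Real.log_div ha.ne' hb.ne', ent]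
  linarith

end RnDeriv

end

theorem key_lemma_general {Ω : Type*} [MeasurableSpace Ω] (μ ρ : Measure Ω)
    [IsProbabilityMeasure μ] [IsProbabilityMeasure ρ] (hac : μ ≪ ρ)
    (f : Ω → ℝ) (hf0 : 0 ≤ f)
    (hfint : Integrable f μ) (hflog : Integrable (fun ω => f ω * Real.log (f ω)) μ)
    (hpos : 0 < ∫ ω, f ω ∂μ) :
    (((∫ ω, f ω ∂μ) * Real.log ((∫ ω, f ω ∂μ) / ∫ ω, f ω ∂ρ)) : EReal)
      ≤ (ent μ f : EReal)
        + ((∫ ω, f ω ∂μ : ℝ) : EReal) * ENNReal.log (1 + chi2ENN μ ρ) := by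
  have hN1 := one_le_lintegral_rnDeriv_sq hac
  rw [chi2ENN, add_tsub_cancel_of_le hN1]
  rcases eq_or_ne (∫⁻ ω, μ.rnDeriv ρ ω ^ 2 ∂ρ) ∞ with hN | hN
  · rw [hN, ENNReal.log_top, EReal.coe_mul_top_of_pos hpos, EReal.coe_add_top]
    exact le_top
  · rw [ENNReal.log_pos_real (one_pos.trans_le hN1).ne' hN]
    exact_mod_cast mul_log_div_le_ent_add_mul_log hac hf0 hfint hflog hpos hN

theorem key_lemma {Ω : Type*} [MeasurableSpace Ω] (μ ρ : Measure Ω)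
    [IsProbabilityMeasure μ] [IsProbabilityMeasure ρ] (hac : μ ≪ ρ)
    (f : Ω → ℝ) (hf : Measurable f) (hf0 : 0 ≤ f)
    (hfint : Integrable f μ) (hflog : Integrable (fun ω => f ω * Real.log (f ω)) μ)
    (hpos : 0 < ∫ ω, f ω ∂μ) :
    (((∫ ω, f ω ∂μ) * Real.log ((∫ ω, f ω ∂μ) / ∫ ω, f ω ∂ρ)) : EReal)
      ≤ (ent μ f : EReal)
        + ((∫ ω, f ω ∂μ : ℝ) : EReal) * ENNReal.log (1 + chi2ENN μ ρ) :=
  key_lemma_general μ ρ hac f hf0 hfint hflog hpos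
end

section
/- Donsker–Varadhan variational formula: for probability measures μ ≪ ν on a measurable space, KL(μ∥ν) = sup over bounded measurable g of { E_μ[g] - log E_ν[exp g] }. -/
open MeasureTheory ENNReal

/-! For bounded `g`, `KL(μ‖ν) - (∫ g dμ - log ∫ exp g dν)` is the divergence of `μ` from the
tilted measure `ν.tilted g ∝ exp g • ν`, hence nonnegative by Gibbs' inequality. Conversely,
truncating the log-likelihood ratio to `[-n, n]` gives bounded `gₙ` with
`∫ exp gₙ dν ≤ 1 + exp (-n)` and `∫ gₙ dμ → KL(μ‖ν)` by dominated convergence. -/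

open Real Filter Topology

namespace MeasureTheory

variable {Ω : Type*} [MeasurableSpace Ω] {μ ν : Measure Ω}

lemma integral_sub_log_integral_exp_le_integral_llr [IsProbabilityMeasure μ] [SigmaFinite ν]
    (hμν : μ ≪ ν) (h_int : Integrable (llr μ ν) μ) {g : Ω → ℝ} (hgμ : Integrable g μ)
    (hgν : Integrable (fun x ↦ exp (g x)) ν) :
    ∫ x, g x ∂μ - log (∫ x, exp (g x) ∂ν) ≤ ∫ x, llr μ ν x ∂μ := by
  have : NeZero ν :=
    ⟨fun h ↦ IsProbabilityMeasure.ne_zero μ (Measure.absolutelyContinuous_zero_iff.1 (h ▸ hμν))⟩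
  have := isProbabilityMeasure_tilted hgν
  have h_gibbs := InformationTheory.integral_llr_add_sub_measure_univ_nonneg
    (hμν.trans (absolutelyContinuous_tilted hgν))
    (integrable_llr_tilted_right hμν hgμ h_int hgν)
  rw [integral_llr_tilted_right hμν hgμ hgν h_int] at h_gibbs
  simp only [probReal_univ] at h_gibbs
  linarith

lemma integrable_exp_of_abs_le [IsFiniteMeasure μ] {g : Ω → ℝ} (hg : Measurable g) {M : ℝ}
    (hM : ∀ x, |g x| ≤ M) : Integrable (fun x ↦ exp (g x)) μ :=
  Integrable.of_bound hg.exp.aestronglyMeasurable (exp M) <| ae_of_all _ fun x ↦ by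
    simpa [abs_of_pos (exp_pos _)] using (abs_le.1 (hM x)).2

variable (μ ν) in
/-- Taking the maximum with `exp (-n)` before the logarithm sends the null set of the density to
`-n` rather than to the junk value `log 0 = 0`. -/
noncomputable def truncatedLLR (n : ℕ) (x : Ω) : ℝ :=
  min (log (max (μ.rnDeriv ν x).toReal (exp (-n)))) n

lemma measurable_truncatedLLR (n : ℕ) : Measurable (truncatedLLR μ ν n) := by
  unfold truncatedLLR
  fun_prop

lemma abs_truncatedLLR_le (n : ℕ) (x : Ω) : |truncatedLLR μ ν n x| ≤ n := by
  have : -(n : ℝ) ≤ log (max (μ.rnDeriv ν x).toReal (exp (-n))) := by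
    simpa using log_le_log (exp_pos _) (le_max_right _ _)
  exact abs_le.2 ⟨le_min this (by linarith [n.cast_nonneg (α := ℝ)]), min_le_right _ _⟩

lemma exp_truncatedLLR_le (n : ℕ) (x : Ω) :
    exp (truncatedLLR μ ν n x) ≤ (μ.rnDeriv ν x).toReal + exp (-n) :=
  calc exp (truncatedLLR μ ν n x)
      ≤ exp (log (max (μ.rnDeriv ν x).toReal (exp (-n)))) := exp_le_exp.2 (min_le_left _ _)
    _ = max (μ.rnDeriv ν x).toReal (exp (-n)) := exp_log (lt_max_of_lt_right (exp_pos _))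
    _ ≤ (μ.rnDeriv ν x).toReal + exp (-n) := max_le_add_of_nonneg toReal_nonneg (exp_pos _).le

lemma truncatedLLR_of_pos {x : Ω} (hx : 0 < (μ.rnDeriv ν x).toReal) (n : ℕ) :
    truncatedLLR μ ν n x = min (max (llr μ ν x) (-n)) n := by
  rw [truncatedLLR, llr_def]
  rcases le_total (μ.rnDeriv ν x).toReal (exp (-n)) with h | h
  · rw [max_eq_right h, log_exp, max_eq_right (by simpa using log_le_log hx h)]
  · rw [max_eq_left h, max_eq_left (by simpa using log_le_log (exp_pos _) h)]

lemma abs_truncatedLLR_le_abs_llr {x : Ω} (hx : 0 < (μ.rnDeriv ν x).toReal) (n : ℕ) :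
    |truncatedLLR μ ν n x| ≤ |llr μ ν x| := by
  have := abs_nonneg (llr μ ν x)
  rw [truncatedLLR_of_pos hx, abs_le]
  exact ⟨le_min (le_max_of_le_left (neg_abs_le _)) (by linarith [n.cast_nonneg (α := ℝ)]),
    (min_le_left _ _).trans (max_le (le_abs_self _) (by linarith))⟩

lemma truncatedLLR_eventuallyEq {x : Ω} (hx : 0 < (μ.rnDeriv ν x).toReal) :
    (fun n ↦ truncatedLLR μ ν n x) =ᶠ[atTop] fun _ ↦ llr μ ν x := by
  filter_upwards [tendsto_natCast_atTop_atTop.eventually_ge_atTop |llr μ ν x|] with n hn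
  obtain ⟨hlow, hup⟩ := abs_le.1 hn
  rw [truncatedLLR_of_pos hx, max_eq_left (by linarith), min_eq_left hup]

lemma tendsto_integral_truncatedLLR [SigmaFinite μ] [SigmaFinite ν] (hμν : μ ≪ ν)
    (h_int : Integrable (llr μ ν) μ) :
    Tendsto (fun n ↦ ∫ x, truncatedLLR μ ν n x ∂μ) atTop (𝓝 (∫ x, llr μ ν x ∂μ)) := by
  have h_pos : ∀ᵐ x ∂μ, 0 < (μ.rnDeriv ν x).toReal := by
    filter_upwards [Measure.rnDeriv_pos hμν, hμν.ae_le (Measure.rnDeriv_lt_top μ ν)]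
      with x h0 htop
    exact toReal_pos h0.ne' htop.ne
  refine tendsto_integral_of_dominated_convergence (fun x ↦ |llr μ ν x|)
    (fun n ↦ (measurable_truncatedLLR n).aestronglyMeasurable) h_int.abs
    (fun n ↦ h_pos.mono fun x hx ↦ abs_truncatedLLR_le_abs_llr hx n) ?_
  filter_upwards [h_pos] with x hx
  exact tendsto_const_nhds.congr' (truncatedLLR_eventuallyEq hx).symm

lemma integral_exp_truncatedLLR_le [IsProbabilityMeasure μ] [IsProbabilityMeasure ν]
    (hμν : μ ≪ ν) (n : ℕ) : ∫ x, exp (truncatedLLR μ ν n x) ∂ν ≤ 1 + exp (-n) :=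
  calc ∫ x, exp (truncatedLLR μ ν n x) ∂ν
      ≤ ∫ x, ((μ.rnDeriv ν x).toReal + exp (-n)) ∂ν :=
        integral_mono
          (integrable_exp_of_abs_le (measurable_truncatedLLR n) (abs_truncatedLLR_le n))
          (Measure.integrable_toReal_rnDeriv.add (integrable_const _)) (exp_truncatedLLR_le n)
    _ = 1 + exp (-n) := by
        rw [integral_add Measure.integrable_toReal_rnDeriv (integrable_const _),
          Measure.integral_toReal_rnDeriv hμν]
        simp

lemma integral_truncatedLLR_sub_exp_le [IsProbabilityMeasure μ] [IsProbabilityMeasure ν]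
    (hμν : μ ≪ ν) (n : ℕ) :
    ∫ x, truncatedLLR μ ν n x ∂μ - exp (-n)
      ≤ ∫ x, truncatedLLR μ ν n x ∂μ - log (∫ x, exp (truncatedLLR μ ν n x) ∂ν) := by
  have h_pos := integral_exp_pos (μ := ν) (integrable_exp_of_abs_le
    (measurable_truncatedLLR (μ := μ) (ν := ν) n) (abs_truncatedLLR_le n))
  linarith [log_le_sub_one_of_pos h_pos, integral_exp_truncatedLLR_le hμν n]

end MeasureTheory

theorem donsker_varadhan {Ω : Type*} [MeasurableSpace Ω] (μ ν : Measure Ω)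
    [IsProbabilityMeasure μ] [IsProbabilityMeasure ν] (hac : μ ≪ ν)
    (hint : Integrable (fun ω => Real.log ((μ.rnDeriv ν ω).toReal)) μ) :
    ∫ ω, Real.log ((μ.rnDeriv ν ω).toReal) ∂μ
      = ⨆ g : {g : Ω → ℝ // Measurable g ∧ ∃ M, ∀ ω, |g ω| ≤ M},
          (∫ ω, g.1 ω ∂μ - Real.log (∫ ω, Real.exp (g.1 ω) ∂ν)) := by
  change ∫ ω, llr μ ν ω ∂μ = _
  have : Nonempty {g : Ω → ℝ // Measurable g ∧ ∃ M, ∀ ω, |g ω| ≤ M} :=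
    ⟨⟨0, measurable_const, 0, by simp⟩⟩
  refine (ciSup_eq_of_forall_le_of_forall_lt_exists_gt ?_ fun w hw ↦ ?_).symm
  · rintro ⟨g, hg, M, hM⟩
    exact integral_sub_log_integral_exp_le_integral_llr hac hint
      (Integrable.of_bound hg.aestronglyMeasurable M (ae_of_all _ hM))
      (integrable_exp_of_abs_le hg hM)
  have h_lower : Tendsto (fun n : ℕ ↦ ∫ x, truncatedLLR μ ν n x ∂μ - exp (-n)) atTop
      (𝓝 (∫ ω, llr μ ν ω ∂μ)) := by
    simpa using (tendsto_integral_truncatedLLR hac hint).sub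
      (tendsto_exp_neg_atTop_nhds_zero.comp tendsto_natCast_atTop_atTop)
  obtain ⟨n, hn⟩ := (h_lower.eventually (lt_mem_nhds hw)).exists
  exact ⟨⟨truncatedLLR μ ν n, measurable_truncatedLLR n, n, abs_truncatedLLR_le n⟩,
    hn.trans_le (integral_truncatedLLR_sub_exp_le hac n)⟩
end

section
/- Variational principle for entropy: for a nonnegative integrable random variable Y on a probability space, Ent(Y) = sup { E[YZ] : Z measurable with E[exp Z] ≤ 1 }. -/
/-!
Upper bound: the Fenchel–Young inequality `y z ≤ y log y - y log m - y + m e^z`, integrated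
with `m = E[Y]`, gives `E[YZ] ≤ Ent(Y) + m (E[e^Z] - 1) ≤ Ent(Y)`.
Lower bound: `Z = log (Y / m)` would attain equality but is `-∞` on `{Y = 0}`. Replacing `Y` by
`c > 0` there and normalising by `m + c` instead of `m` gives an admissible `Z` with
`E[YZ] = E[Y log Y] - m log (m + c) ≥ Ent(Y) - c`.
-/

open MeasureTheory Real

noncomputable def entropy {Ω : Type*} [MeasurableSpace Ω] (μ : Measure Ω) (Y : Ω → ℝ) : ℝ :=
  ∫ ω, Y ω * log (Y ω) ∂μ - (∫ ω, Y ω ∂μ) * log (∫ ω, Y ω ∂μ)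

lemma Real.mul_le_mul_log_sub_add_mul_exp {y m : ℝ} (z : ℝ) (hy : 0 ≤ y) (hm : 0 < m) :
    y * z ≤ y * log y - y * log m - y + m * exp z := by
  rcases hy.eq_or_lt with rfl | hy
  · simp only [zero_mul, sub_zero]; positivity
  · have key := mul_le_mul_of_nonneg_left (add_one_le_exp (z - log (y / m))) hy.le
    rw [exp_sub, exp_log (by positivity), log_div hy.ne' hm.ne'] at key
    have : y * (exp z / (y / m)) = m * exp z := by field_simp
    linarith

lemma Real.mul_log_add_le {m c : ℝ} (hm : 0 ≤ m) (hc : 0 ≤ c) :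
    m * log (m + c) ≤ m * log m + c := by
  rcases hm.eq_or_lt with rfl | hm
  · simpa using hc
  · have h := log_le_sub_one_of_pos (x := (m + c) / m) (by positivity)
    rw [log_div (by positivity) hm.ne', add_div, div_self hm.ne'] at h
    calc m * log (m + c) = m * log m + m * (log (m + c) - log m) := by ring
      _ ≤ m * log m + m * (c / m) := by gcongr; linarith
      _ = m * log m + c := by field_simp

section

variable {Ω : Type*} [MeasurableSpace Ω] {μ : Measure Ω} {Y Z : Ω → ℝ}

lemma integral_mul_le_entropy (hY0 : 0 ≤ Y) (hYint : Integrable Y μ)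
    (hYlog : Integrable (fun ω => Y ω * log (Y ω)) μ)
    (hZexp : Integrable (fun ω => exp (Z ω)) μ) (hZ1 : ∫ ω, exp (Z ω) ∂μ ≤ 1)
    (hYZ : Integrable (fun ω => Y ω * Z ω) μ) :
    ∫ ω, Y ω * Z ω ∂μ ≤ entropy μ Y := by
  set m := ∫ ω, Y ω ∂μ
  rcases (integral_nonneg hY0 : 0 ≤ m).eq_or_lt with hm | hm
  · have hY_ae : Y =ᵐ[μ] 0 := (integral_eq_zero_iff_of_nonneg hY0 hYint).1 hm.symm
    have hYZ0 : ∫ ω, Y ω * Z ω ∂μ = 0 := integral_eq_zero_of_ae <| by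
      filter_upwards [hY_ae] with ω h; simp [h]
    have hYlog0 : ∫ ω, Y ω * log (Y ω) ∂μ = 0 := integral_eq_zero_of_ae <| by
      filter_upwards [hY_ae] with ω h; simp [h]
    simp [entropy, ← hm, hYZ0, hYlog0]
  · have h1 : Integrable (fun ω => Y ω * log (Y ω) - log m * Y ω) μ :=
      hYlog.sub (hYint.const_mul _)
    have h2 : Integrable (fun ω => Y ω * log (Y ω) - log m * Y ω - Y ω) μ := h1.sub hYint
    have young : ∫ ω, Y ω * Z ω ∂μ ≤
        ∫ ω, (Y ω * log (Y ω) - log m * Y ω - Y ω + m * exp (Z ω)) ∂μ :=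
      integral_mono hYZ (h2.add (hZexp.const_mul m)) fun ω => by
        linarith [mul_le_mul_log_sub_add_mul_exp (Z ω) (hY0 ω) hm]
    rw [integral_add h2 (hZexp.const_mul m), integral_sub h1 hYint,
      integral_sub hYlog (hYint.const_mul _), integral_const_mul, integral_const_mul] at young
    have := mul_le_mul_of_nonneg_left hZ1 hm.le
    rw [entropy]
    linarith

lemma exists_entropy_sub_le_integral_mul [IsProbabilityMeasure μ] (hY : Measurable Y)
    (hY0 : 0 ≤ Y) (hYint : Integrable Y μ) (hYlog : Integrable (fun ω => Y ω * log (Y ω)) μ)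
    {c : ℝ} (hc : 0 < c) :
    ∃ Z : Ω → ℝ, (Measurable Z ∧ Integrable (fun ω => exp (Z ω)) μ ∧
      ∫ ω, exp (Z ω) ∂μ ≤ 1 ∧ Integrable (fun ω => Y ω * Z ω) μ) ∧
      entropy μ Y - c ≤ ∫ ω, Y ω * Z ω ∂μ := by
  set m := ∫ ω, Y ω ∂μ
  have hm : 0 ≤ m := integral_nonneg hY0
  set W : Ω → ℝ := fun ω => if Y ω = 0 then c else Y ω
  have hW_pos ω : 0 < W ω := by
    simp only [W]; split_ifs with h
    · exact hc
    · exact (hY0 ω).lt_of_ne' h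
  have hW_le ω : W ω ≤ Y ω + c := by
    simp only [W]; split_ifs with h <;> linarith [hY0 ω]
  have hY_log_W ω : Y ω * log (W ω) = Y ω * log (Y ω) := by
    simp only [W]; split_ifs with h <;> simp [h]
  have hW_meas : Measurable W := Measurable.ite (measurableSet_eq_fun hY measurable_const)
    measurable_const hY
  have hW_int : Integrable W μ :=
    (hYint.add (integrable_const c)).mono' hW_meas.aestronglyMeasurable
      (.of_forall fun ω => by rw [norm_of_nonneg (hW_pos ω).le]; exact hW_le ω)
  have hexp : (fun ω => exp (log (W ω) - log (m + c))) = fun ω => W ω / (m + c) := by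
    funext ω; rw [exp_sub, exp_log (hW_pos ω), exp_log (by linarith)]
  have hYZ : (fun ω => Y ω * (log (W ω) - log (m + c))) =
      fun ω => Y ω * log (Y ω) - log (m + c) * Y ω := by
    funext ω; rw [mul_sub, hY_log_W]; ring
  refine ⟨fun ω => log (W ω) - log (m + c), ⟨hW_meas.log.sub_const _, ?_, ?_, ?_⟩, ?_⟩
  · rw [hexp]; exact hW_int.div_const _
  · rw [hexp, integral_div, div_le_one (by linarith)]
    calc ∫ ω, W ω ∂μ ≤ ∫ ω, Y ω + c ∂μ :=
          integral_mono hW_int (hYint.add (integrable_const c)) hW_le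
      _ = m + c := by simp [integral_add hYint (integrable_const c), m]
  · rw [hYZ]; exact hYlog.sub (hYint.const_mul _)
  · rw [hYZ, integral_sub hYlog (hYint.const_mul _), integral_const_mul, entropy]
    linarith [mul_log_add_le hm hc.le]

end

theorem entropy_variational {Ω : Type*} [MeasurableSpace Ω] (μ : Measure Ω)
    [IsProbabilityMeasure μ] (Y : Ω → ℝ) (hY : Measurable Y) (hY0 : 0 ≤ Y)
    (hYint : Integrable Y μ)
    (hYlog : Integrable (fun ω => Y ω * Real.log (Y ω)) μ) :
    ∫ ω, Y ω * Real.log (Y ω) ∂μ - (∫ ω, Y ω ∂μ) * Real.log (∫ ω, Y ω ∂μ)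
      = ⨆ Z : {Z : Ω → ℝ // Measurable Z ∧ Integrable (fun ω => Real.exp (Z ω)) μ ∧
            (∫ ω, Real.exp (Z ω) ∂μ) ≤ 1 ∧ Integrable (fun ω => Y ω * Z ω) μ},
          ∫ ω, Y ω * Z.1 ω ∂μ := by
  have : Nonempty {Z : Ω → ℝ // Measurable Z ∧ Integrable (fun ω => Real.exp (Z ω)) μ ∧
      (∫ ω, Real.exp (Z ω) ∂μ) ≤ 1 ∧ Integrable (fun ω => Y ω * Z ω) μ} :=
    let ⟨Z, hZ, _⟩ := exists_entropy_sub_le_integral_mul hY hY0 hYint hYlog one_pos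
    ⟨⟨Z, hZ⟩⟩
  refine (ciSup_eq_of_forall_le_of_forall_lt_exists_gt ?_ fun w hw => ?_).symm
  · rintro ⟨Z, -, hexp, hexp_le, hYZ⟩
    exact integral_mul_le_entropy hY0 hYint hYlog hexp hexp_le hYZ
  · obtain ⟨Z, hZ, hle⟩ :=
      exists_entropy_sub_le_integral_mul hY hY0 hYint hYlog (half_pos (sub_pos.2 hw))
    exact ⟨⟨Z, hZ⟩, by unfold entropy at hle; linarith⟩
end

section
/- Lower bound showing exponential dependence is necessary: let μ = ½δ_{-R} + ½δ_R on ℝ and t > 0 with t ≤ R². Then the Poincaré constant of μ * γ_{0,t} (with respect to the standard gradient) satisfies C_P(μ * γ_{0,t}) ≥ (R²/4)·exp(R²/(8t)). -/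
/-!
Test the Poincaré inequality on the ramp `f = clamp (x / a)` with `a = R / 2`. The mixture
`ρ = ½ N(-R, t) + ½ N(R, t)` is symmetric and `f` is odd, so `Var_ρ f = ∫ f² ≥ 1 - p` with
`p = ρ [-a, a]`, while `∫ f'² ≤ p / a²`; hence `C ≥ a² (1 - p) / p`. By symmetry `p` is the mass
`N(R, t)` gives to `[-a, a]`, and comparing the densities of `N(R, t)` and `N(R / 2, t)` on
`(-∞, R / 2]` bounds it by `½ exp (-R² / (8t))`.
-/

open MeasureTheory ENNReal ProbabilityTheory

noncomputable def var {Y : Type*} [MeasurableSpace Y] (ρ : Measure Y) (f : Y → ℝ) : ℝ :=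
  ∫ y, f y ^ 2 ∂ρ - (∫ y, f y ∂ρ) ^ 2

noncomputable def convR (μ ν : Measure ℝ) : Measure ℝ :=
  (μ.prod ν).map fun p => p.1 + p.2

open Set

noncomputable def ramp (a x : ℝ) : ℝ := max (-1) (min 1 (x / a))

section Ramp

variable {a : ℝ}

lemma ramp_neg (a x : ℝ) : ramp a (-x) = -ramp a x := by
  simp only [ramp, neg_div, max_def, min_def]
  split_ifs <;> linarith

lemma abs_ramp_le_one (a x : ℝ) : |ramp a x| ≤ 1 :=
  abs_le.2 ⟨le_max_left _ _, max_le (by norm_num) (min_le_left _ _)⟩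

lemma lipschitzWith_ramp (a : ℝ) : LipschitzWith ‖a⁻¹‖₊ (ramp a) := by
  have hdiv : LipschitzWith ‖a⁻¹‖₊ fun x : ℝ => x / a := by
    simpa only [smul_eq_mul, div_eq_inv_mul] using lipschitzWith_smul (β := ℝ) a⁻¹
  exact (hdiv.const_min 1).const_max (-1)

lemma continuous_ramp (a : ℝ) : Continuous (ramp a) := (lipschitzWith_ramp a).continuous

lemma ramp_of_le (ha : 0 < a) {x : ℝ} (hx : a ≤ x) : ramp a x = 1 := by
  have : 1 ≤ x / a := (one_le_div ha).2 hx
  rw [ramp, min_eq_left this, max_eq_right (by norm_num)]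

lemma ramp_of_le_neg (ha : 0 < a) {x : ℝ} (hx : x ≤ -a) : ramp a x = -1 := by
  have : x / a ≤ -1 := by rwa [div_le_iff₀ ha, neg_one_mul]
  exact max_eq_left ((min_le_right _ _).trans this)

lemma indicator_compl_Icc_le_ramp_sq (ha : 0 < a) (x : ℝ) :
    (Icc (-a) a)ᶜ.indicator 1 x ≤ ramp a x ^ 2 := by
  by_cases hx : x ∈ Icc (-a) a
  · simp [indicator_of_notMem (notMem_compl_iff.2 hx), sq_nonneg]
  · rw [indicator_of_mem hx, Pi.one_apply]
    rcases not_and_or.1 hx with hx | hx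
    · rw [ramp_of_le_neg ha (not_le.1 hx).le]; norm_num
    · rw [ramp_of_le ha (not_le.1 hx).le]; norm_num

lemma deriv_ramp_eq_zero (ha : 0 < a) {x : ℝ} (hx : x ∉ Icc (-a) a) : deriv (ramp a) x = 0 := by
  rcases not_and_or.1 hx with hx | hx
  · have : ramp a =ᶠ[nhds x] fun _ => -1 := by
      filter_upwards [eventually_lt_nhds (not_le.1 hx)] with y hy using ramp_of_le_neg ha hy.le
    rw [this.deriv_eq, deriv_const]
  · have : ramp a =ᶠ[nhds x] fun _ => 1 := by
      filter_upwards [eventually_gt_nhds (not_le.1 hx)] with y hy using ramp_of_le ha hy.le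
    rw [this.deriv_eq, deriv_const]

lemma deriv_ramp_sq_le (ha : 0 < a) (x : ℝ) :
    deriv (ramp a) x ^ 2 ≤ (Icc (-a) a).indicator (fun _ => (a ^ 2)⁻¹) x := by
  by_cases hx : x ∈ Icc (-a) a
  · have h := norm_deriv_le_of_lipschitz (x₀ := x) (lipschitzWith_ramp a)
    rw [coe_nnnorm, Real.norm_eq_abs, Real.norm_eq_abs, abs_inv, abs_of_pos ha] at h
    rw [indicator_of_mem hx, ← inv_pow, ← sq_abs]
    exact pow_le_pow_left₀ (abs_nonneg _) h 2
  · rw [deriv_ramp_eq_zero ha hx, indicator_of_notMem hx]; norm_num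

end Ramp

lemma integral_eq_zero_of_odd {G : Type*} [MeasurableSpace G] [AddGroup G] [MeasurableNeg G]
    {μ : Measure G} [μ.IsNegInvariant] {f : G → ℝ} (hf : ∀ x, f (-x) = -f x) :
    ∫ x, f x ∂μ = 0 := by
  have h := integral_neg_eq_self f μ
  simp only [hf, integral_neg] at h
  linarith

section Symmetric

variable {μ : Measure ℝ} {a : ℝ}

lemma one_sub_measureReal_Icc_le_var_ramp [IsProbabilityMeasure μ] [μ.IsNegInvariant]
    (ha : 0 < a) : 1 - μ.real (Icc (-a) a) ≤ var μ (ramp a) := by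
  have hint : Integrable (fun x => ramp a x ^ 2) μ := by
    refine .of_bound ((continuous_ramp a).pow 2).aestronglyMeasurable 1 (ae_of_all _ fun x => ?_)
    simpa [abs_pow] using abs_ramp_le_one a x
  rw [var, integral_eq_zero_of_odd (ramp_neg a), ← probReal_compl_eq_one_sub measurableSet_Icc,
    ← integral_indicator_one measurableSet_Icc.compl]
  simpa using integral_mono ((integrable_const 1).indicator measurableSet_Icc.compl) hint
    (indicator_compl_Icc_le_ramp_sq ha)

lemma integral_deriv_ramp_sq_le [IsFiniteMeasure μ] (ha : 0 < a) :
    ∫ x, deriv (ramp a) x ^ 2 ∂μ ≤ μ.real (Icc (-a) a) / a ^ 2 := by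
  calc ∫ x, deriv (ramp a) x ^ 2 ∂μ ≤ ∫ x, (Icc (-a) a).indicator (fun _ => (a ^ 2)⁻¹) x ∂μ :=
        integral_mono_of_nonneg (ae_of_all _ fun _ => sq_nonneg _)
          ((integrable_const _).indicator measurableSet_Icc) (ae_of_all _ (deriv_ramp_sq_le ha))
    _ = μ.real (Icc (-a) a) / a ^ 2 := by
        rw [integral_indicator_const _ measurableSet_Icc, smul_eq_mul, div_eq_mul_inv]

lemma one_sub_le_of_poincare_ramp [IsProbabilityMeasure μ] [μ.IsNegInvariant] (ha : 0 < a)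
    (hp : μ.real (Icc (-a) a) < 1) {C : ℝ}
    (hC : var μ (ramp a) ≤ C * ∫ x, deriv (ramp a) x ^ 2 ∂μ) :
    1 - μ.real (Icc (-a) a) ≤ C * (μ.real (Icc (-a) a) / a ^ 2) := by
  have hvar := one_sub_measureReal_Icc_le_var_ramp (μ := μ) ha
  have henergy : 0 ≤ ∫ x, deriv (ramp a) x ^ 2 ∂μ := integral_nonneg fun _ => sq_nonneg _
  have hC0 : 0 ≤ C := by
    by_contra! hC0
    nlinarith [mul_nonpos_of_nonpos_of_nonneg hC0.le henergy]
  calc 1 - μ.real (Icc (-a) a) ≤ C * ∫ x, deriv (ramp a) x ^ 2 ∂μ := hvar.trans hC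
    _ ≤ C * (μ.real (Icc (-a) a) / a ^ 2) := by gcongr; exact integral_deriv_ramp_sq_le ha

end Symmetric

section Gaussian

open Real

variable {m : ℝ} {v : NNReal}

instance : (gaussianReal 0 v).IsNegInvariant :=
  ⟨by rw [Measure.neg, gaussianReal_map_neg, neg_zero]⟩

lemma gaussianReal_Iic_self (hv : v ≠ 0) (m : ℝ) : gaussianReal m v (Iic m) = 2⁻¹ := by
  have : NullSingletonClass (gaussianReal 0 v) :=
    ⟨fun x => gaussianReal_absolutelyContinuous 0 hv (Real.volume_singleton (a := x))⟩
  have hshift : gaussianReal m v (Iic m) = gaussianReal 0 v (Iic 0) := by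
    rw [← zero_add m, ← gaussianReal_map_const_add, zero_add,
      Measure.map_apply (measurable_const_add m) measurableSet_Iic, preimage_const_add_Iic,
      sub_self]
  have hreflect : gaussianReal 0 v (Ioi 0) = gaussianReal 0 v (Iic 0) := by
    rw [measure_congr Ioi_ae_eq_Ici, show Ici (0 : ℝ) = -Iic 0 by rw [neg_Iic, neg_zero],
      Measure.measure_neg]
  have htotal : gaussianReal 0 v (Iic 0) + gaussianReal 0 v (Ioi 0) = 1 := by
    rw [← measure_union (Iic_disjoint_Ioi le_rfl) measurableSet_Ioi, Iic_union_Ioi, measure_univ]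
  rw [hreflect, ← two_mul, mul_comm] at htotal
  rw [hshift, ENNReal.eq_inv_of_mul_eq_one_left htotal]

lemma gaussianPDF_le_exp_mul_gaussianPDF {d x : ℝ} (hd : 0 ≤ d) (hx : x ≤ m - d) :
    gaussianPDF m v x ≤ ENNReal.ofReal (exp (-d ^ 2 / (2 * v))) * gaussianPDF (m - d) v x := by
  rw [gaussianPDF, gaussianPDF, ← ENNReal.ofReal_mul (exp_nonneg _)]
  refine ENNReal.ofReal_le_ofReal ?_
  rw [gaussianPDFReal, gaussianPDFReal, mul_left_comm, ← exp_add]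
  gcongr _ * exp ?_
  rw [← add_div]
  gcongr ?_ / _
  nlinarith

lemma gaussianReal_Iic_sub_le (hv : v ≠ 0) {d : ℝ} (hd : 0 ≤ d) :
    gaussianReal m v (Iic (m - d)) ≤ ENNReal.ofReal (exp (-d ^ 2 / (2 * v))) * 2⁻¹ := by
  calc gaussianReal m v (Iic (m - d))
      ≤ ∫⁻ x in Iic (m - d),
          ENNReal.ofReal (exp (-d ^ 2 / (2 * v))) * gaussianPDF (m - d) v x := by
        rw [gaussianReal_apply _ hv]
        exact setLIntegral_mono ((measurable_gaussianPDF _ _).const_mul _)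
          fun x hx => gaussianPDF_le_exp_mul_gaussianPDF hd hx
    _ = ENNReal.ofReal (exp (-d ^ 2 / (2 * v))) * 2⁻¹ := by
        rw [lintegral_const_mul _ (measurable_gaussianPDF _ _), ← gaussianReal_apply _ hv,
          gaussianReal_Iic_self hv]

end Gaussian

lemma convR_add_left (μ μ' ν : Measure ℝ) [SFinite μ] [SFinite μ'] [SFinite ν] :
    convR (μ + μ') ν = convR μ ν + convR μ' ν := by
  rw [convR, Measure.add_prod, Measure.map_add _ _ (by fun_prop)]
  rfl

lemma convR_smul_left (c : ℝ≥0∞) (μ ν : Measure ℝ) [SFinite ν] :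
    convR (c • μ) ν = c • convR μ ν := by
  rw [convR, Measure.prod_smul_left, Measure.map_smul]
  rfl

lemma convR_dirac_left (x : ℝ) (ν : Measure ℝ) [SFinite ν] :
    convR (Measure.dirac x) ν = ν.map (x + ·) := by
  rw [convR, Measure.dirac_prod, Measure.map_map (by fun_prop) measurable_prodMk_left]
  rfl

noncomputable def symmGaussianMixture (m : ℝ) (v : NNReal) : Measure ℝ :=
  (1/2 : ℝ≥0∞) • gaussianReal (-m) v + (1/2 : ℝ≥0∞) • gaussianReal m v

section Mixture

variable {m : ℝ} {v : NNReal}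

lemma convR_twoPoint_gaussianReal (m : ℝ) (v : NNReal) :
    convR ((1/2 : ℝ≥0∞) • Measure.dirac (-m) + (1/2 : ℝ≥0∞) • Measure.dirac m)
      (gaussianReal 0 v) = symmGaussianMixture m v := by
  simp only [convR_add_left, convR_smul_left, convR_dirac_left, gaussianReal_map_const_add,
    zero_add, symmGaussianMixture]

instance : IsProbabilityMeasure (symmGaussianMixture m v) :=
  ⟨by simp [symmGaussianMixture, ENNReal.inv_two_add_inv_two]⟩

instance : (symmGaussianMixture m v).IsNegInvariant :=
  ⟨by rw [symmGaussianMixture, Measure.neg, Measure.map_add _ _ measurable_neg, Measure.map_smul,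
    Measure.map_smul, gaussianReal_map_neg, gaussianReal_map_neg, neg_neg, add_comm]⟩

lemma symmGaussianMixture_Icc (m a : ℝ) :
    symmGaussianMixture m v (Icc (-a) a) = gaussianReal m v (Icc (-a) a) := by
  have hreflect : gaussianReal (-m) v (Icc (-a) a) = gaussianReal m v (Icc (-a) a) := by
    rw [← gaussianReal_map_neg, ← Measure.neg, Measure.neg_apply, neg_Icc, neg_neg]
  simp only [symmGaussianMixture, Measure.add_apply, Measure.smul_apply, smul_eq_mul, hreflect,
    ← add_mul, ENNReal.add_halves, one_mul]

lemma symmGaussianMixture_real_Icc_le (hv : v ≠ 0) {a : ℝ} (ham : a ≤ m) :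
    (symmGaussianMixture m v).real (Icc (-a) a) ≤ Real.exp (-(m - a) ^ 2 / (2 * v)) / 2 := by
  have h : symmGaussianMixture m v (Icc (-a) a)
      ≤ ENNReal.ofReal (Real.exp (-(m - a) ^ 2 / (2 * v))) * 2⁻¹ := by
    rw [symmGaussianMixture_Icc]
    calc gaussianReal m v (Icc (-a) a) ≤ gaussianReal m v (Iic (m - (m - a))) := by
          rw [sub_sub_self]; exact measure_mono Icc_subset_Iic_self
      _ ≤ _ := gaussianReal_Iic_sub_le hv (sub_nonneg.2 ham)
  simpa [measureReal_def, div_eq_mul_inv, Real.exp_nonneg] using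
    ENNReal.toReal_mono (by finiteness) h

end Mixture

theorem poincare_lower_bound_general (R t : ℝ) (hR : 0 < R) (ht : 0 < t)
    (C : ℝ)
    (hC : ∀ f : ℝ → ℝ, (∃ L : NNReal, LipschitzWith L f) →
      var (convR ((1/2 : ℝ≥0∞) • Measure.dirac (-R) + (1/2 : ℝ≥0∞) • Measure.dirac R)
            (gaussianReal 0 t.toNNReal)) f
        ≤ C * ∫ x, deriv f x ^ 2
            ∂(convR ((1/2 : ℝ≥0∞) • Measure.dirac (-R) + (1/2 : ℝ≥0∞) • Measure.dirac R)
              (gaussianReal 0 t.toNNReal))) :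
    R ^ 2 / 4 * Real.exp (R ^ 2 / (8 * t)) ≤ C := by
  rw [convR_twoPoint_gaussianReal] at hC
  set p := (symmGaussianMixture R t.toNNReal).real (Icc (-(R / 2)) (R / 2))
  set E := Real.exp (R ^ 2 / (8 * t))
  have hE : 1 ≤ E := Real.one_le_exp (by positivity)
  have hpE : E * p ≤ 1 / 2 := by
    have hp : p ≤ _ :=
      symmGaussianMixture_real_Icc_le (Real.toNNReal_pos.2 ht).ne' (half_le_self hR.le)
    have hexp : E * Real.exp (-(R - R / 2) ^ 2 / (2 * t.toNNReal)) = 1 := by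
      rw [Real.coe_toNNReal _ ht.le, ← Real.exp_add, Real.exp_eq_one_iff]
      field_simp
      ring
    calc E * p ≤ E * (Real.exp (-(R - R / 2) ^ 2 / (2 * t.toNNReal)) / 2) := by gcongr
      _ = 1 / 2 := by rw [← mul_div_assoc, hexp]
  have hp_nonneg : 0 ≤ p := measureReal_nonneg
  have key : 1 - p ≤ C * (p / (R / 2) ^ 2) :=
    one_sub_le_of_poincare_ramp (half_pos hR) (by nlinarith)
      (hC _ ⟨_, lipschitzWith_ramp (R / 2)⟩)
  have hp0 : 0 < p := hp_nonneg.lt_of_ne fun h => by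
    rw [← h] at key; norm_num at key
  have hEC : E * p ≤ C / (R / 2) ^ 2 * p := by
    calc E * p ≤ 1 - p := by nlinarith
      _ ≤ C * (p / (R / 2) ^ 2) := key
      _ = C / (R / 2) ^ 2 * p := by ring
  have := (le_div_iff₀ (by positivity)).1 (le_of_mul_le_mul_right hEC hp0)
  linarith

theorem poincare_lower_bound (R t : ℝ) (hR : 0 < R) (ht : 0 < t) (htR : t ≤ R ^ 2)
    (C : ℝ)
    (hC : ∀ f : ℝ → ℝ, (∃ L : NNReal, LipschitzWith L f) →
      var (convR ((1/2 : ℝ≥0∞) • Measure.dirac (-R) + (1/2 : ℝ≥0∞) • Measure.dirac R)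
            (gaussianReal 0 t.toNNReal)) f
        ≤ C * ∫ x, deriv f x ^ 2
            ∂(convR ((1/2 : ℝ≥0∞) • Measure.dirac (-R) + (1/2 : ℝ≥0∞) • Measure.dirac R)
              (gaussianReal 0 t.toNNReal))) :
    R ^ 2 / 4 * Real.exp (R ^ 2 / (8 * t)) ≤ C :=
  poincare_lower_bound_general R t hR ht C hC
end
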